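/- Let B ~ Binomial(k, 1/n) with k ≤ n/2, and let z ≥ 3 be real. Then E[max(0, B − z)] ≤ (1/(z−1)) · exp(−(z−1)). -/

import Mathlib

open Finset

/-- Probability mass function of `Binomial(k, p)`. -/
noncomputable def binomialPMF (k : ℕ) (p : ℝ) (i : ℕ) : ℝ :=
  (k.choose i : ℝ) * p ^ i * (1 - p) ^ (k - i)

/-!
Write `j = ⌊z⌋`. Since `k/n ≤ 1/2`, the binomial weight of `i` is at most
`(k/n)^i / i! ≤ 2 · 4^(-i)`. Only `i > j` contribute, and for them the excess `i - z` is at most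
`2^(i-j-1)`, so the expectation is bounded by a geometric tail summing to `4^(-j)`.
Finally `4^(-j) ≤ e^(-j) / j ≤ e^(-(z-1)) / (z-1)`, because `j ≥ 3` and `j ≥ z - 1`.
-/

open Nat in
theorem Nat.two_pow_le_two_mul_factorial : ∀ i : ℕ, 2 ^ i ≤ 2 * i !
  | 0 => by simp
  | n + 1 => by
    have h := Nat.factorial_mul_pow_le_factorial (m := 1) (n := n)
    rw [Nat.factorial_one, one_mul, add_comm 1 n] at h
    rw [pow_succ, mul_comm]
    exact Nat.mul_le_mul_left 2 h

section binomialPMF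

open Nat

variable {k : ℕ} {p : ℝ}

theorem binomialPMF_nonneg (hp0 : 0 ≤ p) (hp1 : p ≤ 1) (i : ℕ) : 0 ≤ binomialPMF k p i := by
  unfold binomialPMF
  have : 0 ≤ 1 - p := by linarith
  positivity

theorem binomialPMF_le_pow_div_factorial (hp0 : 0 ≤ p) (hp1 : p ≤ 1) (i : ℕ) :
    binomialPMF k p i ≤ (k * p) ^ i / i ! := by
  unfold binomialPMF
  calc (k.choose i : ℝ) * p ^ i * (1 - p) ^ (k - i)
      ≤ (k.choose i : ℝ) * p ^ i := by
        apply mul_le_of_le_one_right (by positivity)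
        exact pow_le_one₀ (by linarith) (by linarith)
    _ ≤ (k : ℝ) ^ i / i ! * p ^ i := by gcongr; exact Nat.choose_le_pow_div i k
    _ = (k * p) ^ i / i ! := by ring

theorem binomialPMF_le_two_mul_quarter_pow (hp0 : 0 ≤ p) (hp1 : p ≤ 1) (hkp : k * p ≤ 1 / 2)
    (i : ℕ) : binomialPMF k p i ≤ 2 * (1 / 4) ^ i := by
  have hfact : (2 : ℝ) ^ i ≤ 2 * i ! := by exact_mod_cast Nat.two_pow_le_two_mul_factorial i
  calc binomialPMF k p i ≤ (k * p) ^ i / i ! := binomialPMF_le_pow_div_factorial hp0 hp1 i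
    _ ≤ (1 / 2) ^ i / i ! := by gcongr
    _ ≤ 2 * (1 / 4) ^ i := by
        rw [div_le_iff₀ (by positivity), show (1 / 2 : ℝ) ^ i = (1 / 4) ^ i * 2 ^ i by
          rw [← mul_pow]; norm_num]
        calc (1 / 4 : ℝ) ^ i * 2 ^ i ≤ (1 / 4) ^ i * (2 * i !) := by gcongr
          _ = 2 * (1 / 4) ^ i * i ! := by ring

end binomialPMF

theorem sum_mul_max_sub_le_quarter_pow_floor {w : ℕ → ℝ} (hw0 : ∀ i, 0 ≤ w i)
    (hw : ∀ i, w i ≤ 2 * (1 / 4) ^ i) {z : ℝ} (hz : 0 ≤ z) (N : ℕ) :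
    ∑ i ∈ range N, w i * max 0 ((i : ℝ) - z) ≤ (1 / 4) ^ ⌊z⌋₊ := by
  set j := ⌊z⌋₊
  set f : ℕ → ℝ := fun i ↦ w i * max 0 ((i : ℝ) - z)
  have hf0 (i : ℕ) : 0 ≤ f i := mul_nonneg (hw0 i) (le_max_left _ _)
  have hlow (i : ℕ) (hi : i ∈ range (j + 1)) : f i = 0 := by
    have : (i : ℝ) ≤ z :=
      (Nat.cast_le.2 (Nat.lt_succ_iff.1 (mem_range.1 hi))).trans (Nat.floor_le hz)
    simp [f, this]
  have hhigh (l : ℕ) : f (j + 1 + l) ≤ (1 / 4) ^ j * (1 / 2) * (1 / 2) ^ l := by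
    have hexcess : ((j + 1 + l : ℕ) : ℝ) - z ≤ 2 ^ l := by
      have h2l : (l : ℝ) + 1 ≤ 2 ^ l := by exact_mod_cast Nat.lt_two_pow_self
      have := Nat.floor_le hz
      push_cast
      linarith
    calc f (j + 1 + l) ≤ 2 * (1 / 4) ^ (j + 1 + l) * 2 ^ l := by
          apply mul_le_mul (hw _) _ (le_max_left _ _) (by positivity)
          exact max_le (by positivity) hexcess
      _ = (1 / 4) ^ j * (1 / 2) * (1 / 2) ^ l := by
          rw [pow_add, pow_add, show (1 / 4 : ℝ) ^ l = (1 / 2) ^ l * (1 / 2) ^ l by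
            rw [← mul_pow]; norm_num]
          have : (1 / 2 : ℝ) ^ l * 2 ^ l = 1 := by rw [← mul_pow]; norm_num
          linear_combination (1 / 4 : ℝ) ^ j * (1 / 2) * (1 / 2 : ℝ) ^ l * this
  calc ∑ i ∈ range N, f i
      ≤ ∑ i ∈ range (j + 1 + N), f i :=
        sum_le_sum_of_subset_of_nonneg (range_mono (by omega)) fun i _ _ ↦ hf0 i
    _ = ∑ l ∈ range N, f (j + 1 + l) := by rw [sum_range_add, sum_eq_zero hlow, zero_add]
    _ ≤ ∑ l ∈ range N, (1 / 4) ^ j * (1 / 2) * (1 / 2 : ℝ) ^ l := sum_le_sum fun l _ ↦ hhigh l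
    _ ≤ (1 / 4) ^ j * (1 / 2) * 2 := by rw [← mul_sum]; gcongr; exact sum_geometric_two_le N
    _ = (1 / 4) ^ j := by ring

theorem natCast_mul_exp_le_four_pow {j : ℕ} (hj : 3 ≤ j) : (j : ℝ) * Real.exp j ≤ 4 ^ j := by
  have he := Real.exp_one_lt_d9
  induction j, hj using Nat.le_induction with
  | base =>
    rw [show ((3 : ℕ) : ℝ) = 1 + 1 + 1 by norm_num, Real.exp_add, Real.exp_add]
    nlinarith [Real.exp_pos 1]
  | succ j hj ih =>
    have hj3 : (3 : ℝ) ≤ j := by exact_mod_cast hj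
    have hstep : ((j : ℝ) + 1) * Real.exp 1 ≤ 4 * j := by nlinarith
    calc ((j + 1 : ℕ) : ℝ) * Real.exp (j + 1 : ℕ)
        = ((j + 1) * Real.exp 1) * Real.exp j := by push_cast; rw [Real.exp_add]; ring
      _ ≤ (4 * j) * Real.exp j := by gcongr
      _ ≤ 4 ^ (j + 1) := by rw [pow_succ]; nlinarith

theorem quarter_pow_floor_le {z : ℝ} (hz : 3 ≤ z) :
    (1 / 4 : ℝ) ^ ⌊z⌋₊ ≤ 1 / (z - 1) * Real.exp (-(z - 1)) := by
  set j := ⌊z⌋₊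
  have hj3 : 3 ≤ j := Nat.le_floor (by exact_mod_cast hz)
  have hj : z - 1 ≤ j := by linarith [Nat.lt_floor_add_one z]
  have hz1 : 0 < z - 1 := by linarith
  calc (1 / 4 : ℝ) ^ j ≤ 1 / j * Real.exp (-j) := by
        rw [one_div_pow, Real.exp_neg, ← div_eq_mul_inv, div_div,
          one_div_le_one_div (by positivity) (by positivity)]
        exact natCast_mul_exp_le_four_pow hj3
    _ ≤ 1 / (z - 1) * Real.exp (-(z - 1)) :=
        mul_le_mul (one_div_le_one_div_of_le hz1 hj) (Real.exp_le_exp.2 (by linarith))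
          (Real.exp_pos _).le (one_div_pos.2 hz1).le

theorem binomial_expected_excess_bound_general (n k : ℕ) (hk : 2 * k ≤ n)
    (z : ℝ) (hz : 3 ≤ z) :
    (∑ i ∈ Finset.range (k + 1), binomialPMF k (1 / (n : ℝ)) i * max 0 ((i : ℝ) - z))
      ≤ (1 / (z - 1)) * Real.exp (-(z - 1)) := by
  have hp0 : 0 ≤ 1 / (n : ℝ) := by positivity
  have hp1 : 1 / (n : ℝ) ≤ 1 := by simpa using Nat.cast_inv_le_one (α := ℝ) n
  have hkp : (k : ℝ) * (1 / n) ≤ 1 / 2 := by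
    rcases Nat.eq_zero_or_pos n with rfl | hn
    · simp
    · rw [mul_one_div, div_le_div_iff₀ (by positivity) two_pos]
      exact_mod_cast (by omega : k * 2 ≤ 1 * n)
  calc _ ≤ (1 / 4 : ℝ) ^ ⌊z⌋₊ :=
        sum_mul_max_sub_le_quarter_pow_floor (binomialPMF_nonneg hp0 hp1)
          (binomialPMF_le_two_mul_quarter_pow hp0 hp1 hkp) (by linarith) (k + 1)
    _ ≤ _ := quarter_pow_floor_le hz

/-- For `B ~ Binomial(k, 1/n)` with `k ≤ n/2` and real `z ≥ 3`,
`E[max(0, B − z)] ≤ (1/(z−1)) · exp(−(z−1))`. -/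
theorem binomial_expected_excess_bound (n k : ℕ) (hn : 0 < n) (hk : 2 * k ≤ n)
    (z : ℝ) (hz : 3 ≤ z) :
    (∑ i ∈ Finset.range (k + 1), binomialPMF k (1 / (n : ℝ)) i * max 0 ((i : ℝ) - z))
      ≤ (1 / (z - 1)) * Real.exp (-(z - 1)) :=
  binomial_expected_excess_bound_general n k hk z hz
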